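/- (Lemma on the auxiliary functions A_k.) For every integer k with 0 ≤ k ≤ n−1 and every u ∈ U, the function A_k defined in the context is differentiable and satisfies A_k'(u) = −(k+1)·a·((n−1)/(n−2))·|F(u)|^{1/(n−2)}·F'(u)·(b_{k+1} + A_{k+1}(u)), where A_n := 0. -/

import Mathlib

/-!
Write `x = |F|`, so that `x' = ν F'` on `U`, and `p = (n-1)/(n-2)`, so that `p - 1 = 1/(n-2)`.
Differentiating the `i`-th term of `A_k`, a multiple of `x^{ip}`, produces `x^{1/(n-2)} x^{(i-1)p}`,
and `i · C(k+i, i) = (k+1) · C(k+i, i-1)` together with `ν · (-ν) = -1` turns its coefficient into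
`-(k+1) a p F'` times the coefficient of the `(i-1)`-st term of `A_{k+1}`. The `i = 1` term gives `b_{k+1}`.
-/

/-- The auxiliary functions `A_k`; note that `A_n = 0` (empty sum). -/
noncomputable def Afun (n : ℕ) (ν a : ℝ) (b : ℕ → ℝ) (F : ℝ → ℝ) (k : ℕ) (u : ℝ) : ℝ :=
  ∑ i ∈ Finset.Icc 1 (n - k),
    (-ν) ^ i * ((k + i).choose i : ℝ) * a ^ i * b (k + i)
      * |F u| ^ (((i : ℝ) * ((n : ℝ) - 1)) / ((n : ℝ) - 2))

open Finset Real

noncomputable def Aterm (n : ℕ) (ν a : ℝ) (b : ℕ → ℝ) (k i : ℕ) (x : ℝ) : ℝ :=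
  (-ν) ^ i * ((k + i).choose i : ℝ) * a ^ i * b (k + i)
    * x ^ (((i : ℝ) * ((n : ℝ) - 1)) / ((n : ℝ) - 2))

lemma Finset.sum_Icc_one_eq_sum_range {M : Type*} [AddCommMonoid M] (m : ℕ) (f : ℕ → M) :
    ∑ i ∈ Icc 1 m, f i = ∑ j ∈ range m, f (j + 1) := by
  rw [range_eq_Ico, sum_Ico_add' f, ← Ico_add_one_right_eq_Icc]

section

variable {n : ℕ} {ν a : ℝ} {b : ℕ → ℝ}

lemma Aterm_zero (k : ℕ) (x : ℝ) : Aterm n ν a b k 0 x = b k := by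
  simp [Aterm]

lemma Afun_eq_sum_range (F : ℝ → ℝ) (k : ℕ) (u : ℝ) :
    Afun n ν a b F k u = ∑ j ∈ range (n - k), Aterm n ν a b k (j + 1) |F u| :=
  sum_Icc_one_eq_sum_range _ _

lemma add_Afun_succ_eq_sum_range (F : ℝ → ℝ) {k : ℕ} (hk : k < n) (u : ℝ) :
    b (k + 1) + Afun n ν a b F (k + 1) u
      = ∑ j ∈ range (n - k), Aterm n ν a b (k + 1) j |F u| := by
  obtain ⟨m, hm⟩ : ∃ m, n - k = m + 1 := ⟨n - k - 1, by omega⟩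
  rw [hm, sum_range_succ', Aterm_zero, Afun_eq_sum_range, show n - (k + 1) = m by omega, add_comm]

lemma cast_choose_succ_mul (k j : ℕ) :
    ((k + 1 + j).choose (j + 1) : ℝ) * (j + 1) = ((k + 1 + j).choose j : ℝ) * (k + 1) := by
  have h := Nat.choose_succ_right_eq (k + 1 + j) j
  rw [show k + 1 + j - j = k + 1 by omega] at h
  exact_mod_cast h

lemma hasDerivAt_Aterm_succ (hn : (n : ℝ) ≠ 2) (k j : ℕ) {x : ℝ} (hx : 0 < x) :
    HasDerivAt (Aterm n ν a b k (j + 1))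
      (-ν * ((k : ℝ) + 1) * a * (((n : ℝ) - 1) / ((n : ℝ) - 2)) * x ^ ((1 : ℝ) / ((n : ℝ) - 2))
        * Aterm n ν a b (k + 1) j x) x := by
  have hn2 : (n : ℝ) - 2 ≠ 0 := sub_ne_zero.mpr hn
  have hpow : x ^ ((((j + 1 : ℕ) : ℝ) * ((n : ℝ) - 1)) / ((n : ℝ) - 2) - 1)
      = x ^ ((1 : ℝ) / ((n : ℝ) - 2)) * x ^ (((j : ℝ) * ((n : ℝ) - 1)) / ((n : ℝ) - 2)) := by
    rw [← rpow_add hx]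
    congr 1
    push_cast
    field_simp
    ring
  refine (((hasDerivAt_id x).rpow_const (Or.inl hx.ne')).const_mul _).congr_deriv ?_
  rw [id, hpow, show k + (j + 1) = k + 1 + j by omega, Aterm]
  push_cast
  linear_combination (-ν) ^ j * a ^ (j + 1) * b (k + 1 + j) * ((n : ℝ) - 1) / ((n : ℝ) - 2)
    * x ^ ((1 : ℝ) / ((n : ℝ) - 2)) * x ^ (((j : ℝ) * ((n : ℝ) - 1)) / ((n : ℝ) - 2))
    * (-ν) * cast_choose_succ_mul k j

end

theorem stmt12_general (n : ℕ) (hn : 4 ≤ n)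
    (U : Set ℝ) (hU : IsOpen U)
    (F : ℝ → ℝ) (hF : ∀ u ∈ U, DifferentiableAt ℝ F u)
    (hFne : ∀ u ∈ U, F u ≠ 0)
    (ν : ℝ) (hν : ν = 1 ∨ ν = -1) (hνF : ∀ u ∈ U, |F u| = ν * F u)
    (a : ℝ) (b : ℕ → ℝ) :
    ∀ k : ℕ, k ≤ n - 1 → ∀ u ∈ U,
      HasDerivAt (Afun n ν a b F k)
        (-((k : ℝ) + 1) * a * (((n : ℝ) - 1) / ((n : ℝ) - 2))
          * |F u| ^ ((1 : ℝ) / ((n : ℝ) - 2)) * deriv F u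
          * (b (k + 1) + Afun n ν a b F (k + 1) u)) u := by
  intro k hk u hu
  have hn2 : (n : ℝ) ≠ 2 := by norm_cast; omega
  have hνν : ν * ν = 1 := by rcases hν with rfl | rfl <;> norm_num
  have habs : HasDerivAt (fun v => |F v|) (ν * deriv F u) u :=
    ((hF u hu).hasDerivAt.const_mul ν).congr_of_eventuallyEq
      (Filter.eventually_of_mem (hU.mem_nhds hu) hνF)
  have hsum := HasDerivAt.fun_sum fun j (_ : j ∈ range (n - k)) =>
    (hasDerivAt_Aterm_succ (ν := ν) (a := a) (b := b) hn2 k j (abs_pos.mpr (hFne u hu))).comp u habs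
  refine (hsum.congr_deriv ?_).congr_of_eventuallyEq
    (.of_forall fun v => Afun_eq_sum_range F k v)
  rw [add_Afun_succ_eq_sum_range F (by omega), mul_sum]
  refine sum_congr rfl fun j _ => ?_
  linear_combination -((k : ℝ) + 1) * a * (((n : ℝ) - 1) / ((n : ℝ) - 2))
    * |F u| ^ ((1 : ℝ) / ((n : ℝ) - 2)) * deriv F u * Aterm n ν a b (k + 1) j |F u| * hνν

theorem stmt12 (n : ℕ) (hn : 4 ≤ n)
    (U : Set ℝ) (hU : IsOpen U) (hUc : U.OrdConnected)
    (F : ℝ → ℝ) (hF : ∀ u ∈ U, DifferentiableAt ℝ F u)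
    (hFne : ∀ u ∈ U, F u ≠ 0)
    (ν : ℝ) (hν : ν = 1 ∨ ν = -1) (hνF : ∀ u ∈ U, |F u| = ν * F u)
    (a : ℝ) (b : ℕ → ℝ) :
    ∀ k : ℕ, k ≤ n - 1 → ∀ u ∈ U,
      HasDerivAt (Afun n ν a b F k)
        (-((k : ℝ) + 1) * a * (((n : ℝ) - 1) / ((n : ℝ) - 2))
          * |F u| ^ ((1 : ℝ) / ((n : ℝ) - 2)) * deriv F u
          * (b (k + 1) + Afun n ν a b F (k + 1) u)) u :=
  stmt12_general n hn U hU F hF hFne ν hν hνF a b
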